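/- arXiv:2603.24362 — 2 statements merged into one kernel-verified Lean document; each statement's English description precedes it below -/
import Mathlib

section
/- Let 0 < λ ≤ Λ, set ω = Λ/λ and α = π/2, let γ > 0, and define u_{XY}(x,y,z) = −γ√ω·sin s − γ√ω·sin r + cos z, where s = (x−α)/√ω and r = (y−α)/√ω. Suppose 0 ≤ s ≤ π/2, 0 ≤ r ≤ π/2, γ√ω·(sin s + sin r) ≤ 1, and 0 ≤ z ≤ arccos(γ√ω·(sin s + sin r)). Then: (i) −M⁺_{λ,Λ}(Hess u_{XY}(x,y,z)) = λ·u_{XY}(x,y,z); (ii) u_{XY}(x,y,z) > 0 whenever z < arccos(γ√ω·(sin s + sin r)); and (iii) u_{XY}(x,y,z) = 0 when z = arccos(γ√ω·(sin s + sin r)). -/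
open Polynomial Matrix

lemma charpoly_conj_aux {n : Type*} [Fintype n] [DecidableEq n] {R : Type*} [CommRing R]
    (P Q M : Matrix n n R) (hPQ : P * Q = 1) :
    (P * M * Q).charpoly = M.charpoly := by
  have hmapPQ : P.map (C : R →+* R[X]) * Q.map C = 1 := by
    rw [← Matrix.map_mul, hPQ, Matrix.map_one _ (map_zero _) (map_one _)]
  have hscalar : Matrix.scalar n (X : R[X]) = (X : R[X]) • (1 : Matrix n n R[X]) := by
    ext i j
    simp [Matrix.smul_apply, Matrix.one_apply, Matrix.diagonal_apply]
  have key : charmatrix (P * M * Q) = P.map C * charmatrix M * Q.map C := by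
    symm
    calc P.map C * charmatrix M * Q.map C
        = P.map C * Matrix.scalar n X * Q.map C - P.map C * M.map C * Q.map C := by
          unfold charmatrix
          simp only [RingHom.mapMatrix_apply]
          rw [mul_sub, sub_mul]
      _ = charmatrix (P * M * Q) := by
          unfold charmatrix
          simp only [RingHom.mapMatrix_apply]
          rw [hscalar, mul_smul_comm, mul_one, smul_mul_assoc, hmapPQ,
            ← Matrix.map_mul, ← Matrix.map_mul]
  unfold Matrix.charpoly
  rw [key, det_mul, det_mul, mul_right_comm, ← det_mul, hmapPQ, det_one, one_mul]

lemma eig_multiset {n : Type*} [Fintype n] [DecidableEq n] [LinearOrder n] (d : n → ℝ)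
    (h : (Matrix.diagonal d).IsHermitian) :
    Finset.univ.val.map h.eigenvalues = Finset.univ.val.map d := by
  have hst := h.spectral_theorem
  rw [RCLike.ofReal_real_eq_id] at hst
  simp only [Function.id_comp] at hst
  have hU := (Matrix.mem_unitaryGroup_iff).mp (h.eigenvectorUnitary).2
  have hcp : (Matrix.diagonal h.eigenvalues).charpoly = (Matrix.diagonal d).charpoly := by
    conv_rhs => rw [hst]
    rw [Unitary.conjStarAlgAut_apply, charpoly_conj_aux _ _ _ hU]
  have hd : ∀ (e : n → ℝ), (Matrix.diagonal e).charpoly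
      = ((Finset.univ.val.map e).map fun a => X - C a).prod := by
    intro e
    rw [Matrix.charpoly_of_upperTriangular _ (Matrix.blockTriangular_diagonal e)]
    rw [Finset.prod]
    rw [Multiset.map_map]
    simp [Matrix.diagonal_apply_eq, Function.comp]
  have := congrArg Polynomial.roots hcp
  rwa [hd, hd, Polynomial.roots_multiset_prod_X_sub_C,
    Polynomial.roots_multiset_prod_X_sub_C] at this

lemma eig_sum {n : Type*} [Fintype n] [DecidableEq n] [LinearOrder n] (d : n → ℝ)
    (h : (Matrix.diagonal d).IsHermitian) (g : ℝ → ℝ) :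
    ∑ i, g (h.eigenvalues i) = ∑ i, g (d i) := by
  calc ∑ i, g (h.eigenvalues i) = ((Finset.univ.val.map h.eigenvalues).map g).sum := by
        rw [Multiset.map_map]; rfl
    _ = ((Finset.univ.val.map d).map g).sum := by rw [eig_multiset d h]
    _ = ∑ i, g (d i) := by rw [Multiset.map_map]; rfl

/-- The Pucci maximal operator `M⁺_{λ,Λ}` of a symmetric matrix:
`Σᵢ (Λ·max(eᵢ,0) + λ·min(eᵢ,0))` over the eigenvalues `eᵢ` (with multiplicity). -/
noncomputable def pucci (lam Lam : ℝ) {n : Type*} [Fintype n] [DecidableEq n]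
    (A : Matrix n n ℝ) : ℝ :=
  if h : A.IsHermitian then
    ∑ i, (Lam * max (h.eigenvalues i) 0 + lam * min (h.eigenvalues i) 0)
  else 0

lemma pucci_diagonal {n : Type*} [Fintype n] [DecidableEq n] [LinearOrder n]
    (lam Lam : ℝ) (d : n → ℝ) :
    pucci lam Lam (Matrix.diagonal d)
      = ∑ i, (Lam * max (d i) 0 + lam * min (d i) 0) := by
  have hH := Matrix.isHermitian_diagonal d
  rw [pucci, dif_pos hH]
  exact eig_sum d hH (fun t => Lam * max t 0 + lam * min t 0)

/-- Partial derivative in the first variable. -/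
noncomputable def d1 (u : ℝ → ℝ → ℝ → ℝ) : ℝ → ℝ → ℝ → ℝ :=
  fun x y z => deriv (fun t => u t y z) x

/-- Partial derivative in the second variable. -/
noncomputable def d2 (u : ℝ → ℝ → ℝ → ℝ) : ℝ → ℝ → ℝ → ℝ :=
  fun x y z => deriv (fun t => u x t z) y

/-- Partial derivative in the third variable. -/
noncomputable def d3 (u : ℝ → ℝ → ℝ → ℝ) : ℝ → ℝ → ℝ → ℝ :=
  fun x y z => deriv (fun t => u x y t) z

/-- The Hessian matrix of second partial derivatives of `u : ℝ³ → ℝ`. -/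
noncomputable def hess3 (u : ℝ → ℝ → ℝ → ℝ) (x y z : ℝ) : Matrix (Fin 3) (Fin 3) ℝ :=
  !![d1 (d1 u) x y z, d2 (d1 u) x y z, d3 (d1 u) x y z;
     d1 (d2 u) x y z, d2 (d2 u) x y z, d3 (d2 u) x y z;
     d1 (d3 u) x y z, d2 (d3 u) x y z, d3 (d3 u) x y z]

/-- The XY-bridge: `u_{XY}(x,y,z) = −γ√ω·sin s − γ√ω·sin r + cos z`, with
`s = (x−α)/√ω`, `r = (y−α)/√ω`, satisfies `−M⁺(Hess u_{XY}) = λ·u_{XY}` on the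
bridge, is positive inside and vanishes on the outer boundary. -/
theorem xy_bridge_eigen (lam Lam γ : ℝ) (hlam : 0 < lam) (hLam : lam ≤ Lam)
    (hγ : 0 < γ) (ω α : ℝ) (hω : ω = Lam / lam) (hα : α = Real.pi / 2)
    (x y z s r : ℝ) (hs : s = (x - α) / Real.sqrt ω) (hr : r = (y - α) / Real.sqrt ω)
    (hs' : 0 ≤ s ∧ s ≤ Real.pi / 2) (hr' : 0 ≤ r ∧ r ≤ Real.pi / 2)
    (harg : γ * Real.sqrt ω * (Real.sin s + Real.sin r) ≤ 1)
    (hz : 0 ≤ z ∧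
      z ≤ Real.arccos (γ * Real.sqrt ω * (Real.sin s + Real.sin r))) :
    (-pucci lam Lam
        (hess3 (fun x y z =>
          -(γ * Real.sqrt ω) * Real.sin ((x - α) / Real.sqrt ω) -
            γ * Real.sqrt ω * Real.sin ((y - α) / Real.sqrt ω) + Real.cos z) x y z) =
      lam * (-(γ * Real.sqrt ω) * Real.sin s - γ * Real.sqrt ω * Real.sin r +
        Real.cos z)) ∧
    (z < Real.arccos (γ * Real.sqrt ω * (Real.sin s + Real.sin r)) →
      0 < -(γ * Real.sqrt ω) * Real.sin s - γ * Real.sqrt ω * Real.sin r +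
        Real.cos z) ∧
    (z = Real.arccos (γ * Real.sqrt ω * (Real.sin s + Real.sin r)) →
      -(γ * Real.sqrt ω) * Real.sin s - γ * Real.sqrt ω * Real.sin r +
        Real.cos z = 0) := by
  have hω0 : 0 < ω := by
    rw [hω]; exact div_pos (lt_of_lt_of_le hlam hLam) hlam
  set w : ℝ := Real.sqrt ω with hwdef
  have hw : 0 < w := Real.sqrt_pos.mpr hω0
  have hww : w * w = ω := Real.mul_self_sqrt hω0.le
  set U : ℝ → ℝ → ℝ → ℝ := fun x y z =>
    -(γ * w) * Real.sin ((x - α) / w) - γ * w * Real.sin ((y - α) / w) + Real.cos z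
    with hUdef
  -- basic derivative facts
  have Hsin : ∀ p : ℝ, HasDerivAt (fun t : ℝ => Real.sin ((t - α) / w))
      (Real.cos ((p - α) / w) * (1 / w)) p := by
    intro p
    have h1 : HasDerivAt (fun t : ℝ => (t - α) / w) (1 / w) p :=
      ((hasDerivAt_id p).sub_const α).div_const w
    exact (Real.hasDerivAt_sin _).comp p h1
  have Hcos : ∀ p : ℝ, HasDerivAt (fun t : ℝ => Real.cos ((t - α) / w))
      (-Real.sin ((p - α) / w) * (1 / w)) p := by
    intro p
    have h1 : HasDerivAt (fun t : ℝ => (t - α) / w) (1 / w) p :=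
      ((hasDerivAt_id p).sub_const α).div_const w
    exact (Real.hasDerivAt_cos _).comp p h1
  -- first partials
  have hd1u : d1 U = fun a _ _ => -(γ * w / w) * Real.cos ((a - α) / w) := by
    funext a b cz
    have h : HasDerivAt (fun t => U t b cz)
        (-(γ * w) * (Real.cos ((a - α) / w) * (1 / w))) a :=
      (((Hsin a).const_mul (-(γ * w))).sub_const _).add_const _
    show deriv (fun t => U t b cz) a = _
    rw [h.deriv]; ring
  have hd2u : d2 U = fun _ b _ => -(γ * w / w) * Real.cos ((b - α) / w) := by
    funext a b cz
    have h : HasDerivAt (fun t => U a t cz)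
        (-(γ * w * (Real.cos ((b - α) / w) * (1 / w)))) b := by
      have : HasDerivAt (fun t : ℝ => -(γ * w) * Real.sin ((a - α) / w)
          - γ * w * Real.sin ((t - α) / w) + Real.cos cz)
          (-(γ * w * (Real.cos ((b - α) / w) * (1 / w)))) b :=
        (((Hsin b).const_mul (γ * w)).const_sub _).add_const _
      exact this
    show deriv (fun t => U a t cz) b = _
    rw [h.deriv]; ring
  have hd3u : d3 U = fun _ _ cz => -Real.sin cz := by
    funext a b cz
    have h : HasDerivAt (fun t => U a b t) (-Real.sin cz) cz :=
      (Real.hasDerivAt_cos cz).const_add _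
    show deriv (fun t => U a b t) cz = _
    rw [h.deriv]
  -- second partials
  have e00 : d1 (d1 U) x y z = γ * w / ω * Real.sin ((x - α) / w) := by
    rw [hd1u]
    show deriv (fun t => -(γ * w / w) * Real.cos ((t - α) / w)) x = _
    rw [((Hcos x).const_mul (-(γ * w / w))).deriv]
    field_simp
    rw [← hww]; ring
  have e11 : d2 (d2 U) x y z = γ * w / ω * Real.sin ((y - α) / w) := by
    rw [hd2u]
    show deriv (fun t => -(γ * w / w) * Real.cos ((t - α) / w)) y = _
    rw [((Hcos y).const_mul (-(γ * w / w))).deriv]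
    field_simp
    rw [← hww]; ring
  have e22 : d3 (d3 U) x y z = -Real.cos z := by
    rw [hd3u]
    show deriv (fun t => -Real.sin t) z = _
    exact (Real.hasDerivAt_sin z).neg.deriv
  have e01 : d2 (d1 U) x y z = 0 := by rw [hd1u]; exact deriv_const _ _
  have e02 : d3 (d1 U) x y z = 0 := by rw [hd1u]; exact deriv_const _ _
  have e10 : d1 (d2 U) x y z = 0 := by rw [hd2u]; exact deriv_const _ _
  have e12 : d3 (d2 U) x y z = 0 := by rw [hd2u]; exact deriv_const _ _
  have e20 : d1 (d3 U) x y z = 0 := by rw [hd3u]; exact deriv_const _ _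
  have e21 : d2 (d3 U) x y z = 0 := by rw [hd3u]; exact deriv_const _ _
  have hhess : hess3 U x y z
      = Matrix.diagonal ![γ * w / ω * Real.sin s, γ * w / ω * Real.sin r, -Real.cos z] := by
    unfold hess3
    ext i j
    fin_cases i <;> fin_cases j <;>
      simp [e00, e01, e02, e10, e11, e12, e20, e21, e22, Matrix.diagonal, hs, hr,
        Matrix.vecHead, Matrix.vecTail]
  -- sign facts
  obtain ⟨hz0, hzle⟩ := hz
  have hpi := Real.pi_pos
  have hsins : 0 ≤ Real.sin s :=
    Real.sin_nonneg_of_nonneg_of_le_pi hs'.1 (by linarith [hs'.2])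
  have hsinr : 0 ≤ Real.sin r :=
    Real.sin_nonneg_of_nonneg_of_le_pi hr'.1 (by linarith [hr'.2])
  have hT0 : 0 ≤ γ * w * (Real.sin s + Real.sin r) := by positivity
  have hzpi2 : z ≤ Real.pi / 2 :=
    hzle.trans ((Real.arccos_le_pi_div_two).mpr hT0)
  have hcosz : 0 ≤ Real.cos z :=
    Real.cos_nonneg_of_mem_Icc ⟨by linarith, hzpi2⟩
  have hd0 : 0 ≤ γ * w / ω * Real.sin s := by positivity
  have hd1' : 0 ≤ γ * w / ω * Real.sin r := by positivity
  have part2 : z < Real.arccos (γ * Real.sqrt ω * (Real.sin s + Real.sin r)) →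
      0 < -(γ * Real.sqrt ω) * Real.sin s - γ * Real.sqrt ω * Real.sin r + Real.cos z := by
    intro hlt
    have hkey : Real.cos (Real.arccos (γ * w * (Real.sin s + Real.sin r))) < Real.cos z :=
      Real.cos_lt_cos_of_nonneg_of_le_pi hz0 (Real.arccos_le_pi _) hlt
    rw [Real.cos_arccos (by linarith) harg] at hkey
    have expand : γ * w * (Real.sin s + Real.sin r)
        = γ * w * Real.sin s + γ * w * Real.sin r := by ring
    rw [expand] at hkey
    linarith
  have part3 : z = Real.arccos (γ * Real.sqrt ω * (Real.sin s + Real.sin r)) →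
      -(γ * Real.sqrt ω) * Real.sin s - γ * Real.sqrt ω * Real.sin r + Real.cos z = 0 := by
    intro hzeq
    rw [hzeq, Real.cos_arccos (by linarith) harg]
    ring
  refine ⟨?_, part2, part3⟩
  rw [hhess, pucci_diagonal]
  rw [Fin.sum_univ_three]
  simp only [Matrix.cons_val_zero, Matrix.cons_val_one, Matrix.head_cons,
    Matrix.cons_val_two, Matrix.tail_cons]
  rw [max_eq_left hd0, min_eq_right hd0, max_eq_left hd1', min_eq_right hd1',
    max_eq_right (neg_nonpos.mpr hcosz), min_eq_left (neg_nonpos.mpr hcosz)]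
  have hLamEq : Lam = lam * ω := by
    rw [hω]; field_simp
  rw [hLamEq]
  field_simp
  ring
end

section
/- Let 0 < λ ≤ Λ, let a ∈ ℝ with |a| < π, let p, q, r ∈ ℝ, and suppose p·q ≥ 0. With κ² = π²/(π²−a²) and M_a(p,q,r) the sheared 3×3 symmetric matrix (upper-left block entries (π²/(π²−a²))·p + (a²/(π²−a²))·q, −(a/√(π²−a²))·q off-diagonal, q; entry (3,3) equal to κ²·r; zeros elsewhere), one has the exact identity M⁺_{λ,Λ}(M_a(p,q,r)) = κ² · M⁺_{λ,Λ}(diag(p,q,r)). (This is the equality case, covering the sign patterns of the central cube, the Z-cap, and the XY-bridge, where the eigenvalues of the 2×2 block carry the same signs as p and q.) -/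
open Polynomial Matrix

/-- The sheared Hessian matrix `M_a(p,q,r)`. -/
noncomputable def shearedHessian (a p q r : ℝ) : Matrix (Fin 3) (Fin 3) ℝ :=
  !![Real.pi ^ 2 / (Real.pi ^ 2 - a ^ 2) * p + a ^ 2 / (Real.pi ^ 2 - a ^ 2) * q,
      -(a / Real.sqrt (Real.pi ^ 2 - a ^ 2)) * q, 0;
     -(a / Real.sqrt (Real.pi ^ 2 - a ^ 2)) * q, q, 0;
     0, 0, Real.pi ^ 2 / (Real.pi ^ 2 - a ^ 2) * r]

lemma charpoly_conj' {n : Type*} [Fintype n] [DecidableEq n]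
    (P A Q : Matrix n n ℝ) (hPQ : P * Q = 1) :
    (P * A * Q).charpoly = A.charpoly := by
  have hcm : charmatrix (P * A * Q)
      = P.map C * charmatrix A * Q.map C := by
    unfold charmatrix
    have h1 : (C : ℝ →+* ℝ[X]).mapMatrix (P * A * Q)
        = P.map C * (C : ℝ →+* ℝ[X]).mapMatrix A * Q.map C := by
      simp [RingHom.mapMatrix_apply, Matrix.map_mul]
    rw [h1, mul_sub, sub_mul]
    congr 1
    have hs : P.map C * Matrix.scalar n (X : ℝ[X]) = Matrix.scalar n (X : ℝ[X]) * P.map C :=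
      (Matrix.scalar_commute (X : ℝ[X]) (fun r' => Commute.all _ _) (P.map C)).symm
    rw [hs, mul_assoc, ← Matrix.map_mul, hPQ]
    simp
  have hdet : det (P.map C) * det (Q.map C) = 1 := by
    rw [← det_mul, ← Matrix.map_mul, hPQ]; simp
  rw [Matrix.charpoly, hcm, det_mul, det_mul, Matrix.charpoly]
  ring_nf
  rw [mul_comm, ← mul_assoc, mul_comm (det (Q.map C))]
  rw [hdet, one_mul]

lemma charpoly_diagonal' {n : Type*} [Fintype n] [DecidableEq n] (d : n → ℝ) :
    (Matrix.diagonal d).charpoly = ∏ i, (X - C (d i)) := by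
  have h : charmatrix (Matrix.diagonal d) = Matrix.diagonal (fun i => X - C (d i)) := by
    ext i j
    by_cases h : i = j
    · subst h; simp
    · simp [h, Matrix.diagonal_apply_ne _ h]
  rw [Matrix.charpoly, h, det_diagonal]

lemma charpoly_eq_prod {n : Type*} [Fintype n] [DecidableEq n]
    (A : Matrix n n ℝ) (hA : A.IsHermitian) :
    A.charpoly = ∏ i, (X - C (hA.eigenvalues i)) := by
  have h := hA.spectral_theorem
  have hU1 : (hA.eigenvectorUnitary : Matrix n n ℝ) *
      (star (hA.eigenvectorUnitary : Matrix n n ℝ)) = 1 := by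
    simpa using (Matrix.mem_unitaryGroup_iff.mp hA.eigenvectorUnitary.2)
  calc A.charpoly = ((hA.eigenvectorUnitary : Matrix n n ℝ) *
        Matrix.diagonal (RCLike.ofReal ∘ hA.eigenvalues) *
        (star (hA.eigenvectorUnitary : Matrix n n ℝ))).charpoly := by exact congrArg Matrix.charpoly h
    _ = (Matrix.diagonal (RCLike.ofReal ∘ hA.eigenvalues)).charpoly :=
        charpoly_conj' _ _ _ hU1
    _ = ∏ i, (X - C (hA.eigenvalues i)) := by
        rw [charpoly_diagonal']; rfl

lemma pucci_eq_roots (lam Lam : ℝ) {n : Type*} [Fintype n] [DecidableEq n]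
    (A : Matrix n n ℝ) (hA : A.IsHermitian) :
    pucci lam Lam A =
      (A.charpoly.roots.map (fun e => Lam * max e 0 + lam * min e 0)).sum := by
  rw [pucci, dif_pos hA]
  have h1 : A.charpoly = ((Finset.univ.val.map hA.eigenvalues).map (fun a => X - C a)).prod := by
    rw [charpoly_eq_prod A hA, Finset.prod, Multiset.map_map]
    rfl
  rw [h1, Polynomial.roots_multiset_prod_X_sub_C, Multiset.map_map]
  rfl

lemma roots_cubic (a b c : ℝ) :
    ((X - C a) * (X - C b) * (X - C c)).roots = {a, b, c} := by
  have := Polynomial.roots_multiset_prod_X_sub_C ({a, b, c} : Multiset ℝ)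
  simpa [mul_assoc] using this

lemma quad_factor (A B cc e₁ e₂ : ℝ) (h1 : e₁ + e₂ = A + B) (h2 : e₁ * e₂ = A * B - cc) :
    ((X : ℝ[X]) - C A) * (X - C B) - C cc = ((X : ℝ[X]) - C e₁) * (X - C e₂) := by
  have hA : A = e₁ + e₂ - B := by linarith
  have hc : cc = A * B - e₁ * e₂ := by linarith
  rw [hc, hA]
  simp only [C_sub, C_add, C_mul]
  ring

lemma exists_roots (k p q : ℝ) (hk1 : 1 ≤ k) (hpq : 0 ≤ p * q) :
    ∃ e₁ e₂ : ℝ, e₁ + e₂ = k * (p + q) ∧ e₁ * e₂ = k * (p * q) := by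
  have hk0 : (0 : ℝ) ≤ k := by linarith
  have hD : 0 ≤ (k * (p + q)) ^ 2 - 4 * (k * (p * q)) := by
    nlinarith [sq_nonneg (k * (p - q)), mul_nonneg (mul_nonneg hk0 (sub_nonneg.mpr hk1)) hpq]
  refine ⟨(k * (p + q) + Real.sqrt ((k * (p + q)) ^ 2 - 4 * (k * (p * q)))) / 2,
          (k * (p + q) - Real.sqrt ((k * (p + q)) ^ 2 - 4 * (k * (p * q)))) / 2,
          by ring, ?_⟩
  have hs := Real.sq_sqrt hD
  nlinarith [hs]

lemma pucci_pair (lam Lam k p q e₁ e₂ : ℝ) (hk : 0 < k) (hpq : 0 ≤ p * q)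
    (hsum : e₁ + e₂ = k * (p + q)) (hprod : e₁ * e₂ = k * (p * q)) :
    (Lam * max e₁ 0 + lam * min e₁ 0) + (Lam * max e₂ 0 + lam * min e₂ 0)
      = k * (Lam * max p 0 + lam * min p 0) + k * (Lam * max q 0 + lam * min q 0) := by
  have hP : 0 ≤ e₁ * e₂ := by rw [hprod]; exact mul_nonneg hk.le hpq
  rcases mul_nonneg_iff.mp hpq with ⟨hp, hq⟩ | ⟨hp, hq⟩
  · have hS : 0 ≤ e₁ + e₂ := by rw [hsum]; positivity
    have he₁ : 0 ≤ e₁ := by nlinarith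
    have he₂ : 0 ≤ e₂ := by nlinarith
    rw [max_eq_left he₁, min_eq_right he₁, max_eq_left he₂, min_eq_right he₂,
      max_eq_left hp, min_eq_right hp, max_eq_left hq, min_eq_right hq]
    linear_combination Lam * hsum
  · have hS : e₁ + e₂ ≤ 0 := by
      rw [hsum]; exact mul_nonpos_of_nonneg_of_nonpos hk.le (by linarith)
    have he₁ : e₁ ≤ 0 := by nlinarith
    have he₂ : e₂ ≤ 0 := by nlinarith
    rw [max_eq_right he₁, min_eq_left he₁, max_eq_right he₂, min_eq_left he₂,
      max_eq_right hp, min_eq_left hp, max_eq_right hq, min_eq_left hq]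
    linear_combination lam * hsum

lemma pucci_scale (lam Lam c x : ℝ) (hc : 0 ≤ c) :
    Lam * max (c * x) 0 + lam * min (c * x) 0 = c * (Lam * max x 0 + lam * min x 0) := by
  rcases le_total x 0 with hx | hx
  · rw [max_eq_right (mul_nonpos_of_nonneg_of_nonpos hc hx), max_eq_right hx,
      min_eq_left (mul_nonpos_of_nonneg_of_nonpos hc hx), min_eq_left hx]
    ring
  · rw [max_eq_left (mul_nonneg hc hx), max_eq_left hx,
      min_eq_right (mul_nonneg hc hx), min_eq_right hx]
    ring

set_option maxHeartbeats 1000000 in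
/-- Equality case of the sheared Pucci identity when `p·q ≥ 0`:
`M⁺_{λ,Λ}(M_a(p,q,r)) = κ²·M⁺_{λ,Λ}(diag(p,q,r))` with `κ² = π²/(π²−a²)`. -/
theorem pucci_sheared_eq_of_pq_nonneg (lam Lam a p q r : ℝ) (hlam : 0 < lam)
    (hLam : lam ≤ Lam) (ha : |a| < Real.pi) (hpq : 0 ≤ p * q) :
    pucci lam Lam (shearedHessian a p q r) =
      Real.pi ^ 2 / (Real.pi ^ 2 - a ^ 2) *
        pucci lam Lam (Matrix.diagonal ![p, q, r]) := by
  obtain ⟨ha1, ha2⟩ := abs_lt.mp ha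
  have hw : 0 < Real.pi ^ 2 - a ^ 2 := by nlinarith
  have hk0 : 0 < Real.pi ^ 2 / (Real.pi ^ 2 - a ^ 2) := div_pos (by positivity) hw
  have hk1 : 1 ≤ Real.pi ^ 2 / (Real.pi ^ 2 - a ^ 2) := (one_le_div hw).mpr (by nlinarith)
  have ht : (a / Real.sqrt (Real.pi ^ 2 - a ^ 2)) * q *
      ((a / Real.sqrt (Real.pi ^ 2 - a ^ 2)) * q)
      = a ^ 2 / (Real.pi ^ 2 - a ^ 2) * q ^ 2 := by
    have h2 : Real.sqrt (Real.pi ^ 2 - a ^ 2) ^ 2 = Real.pi ^ 2 - a ^ 2 := Real.sq_sqrt hw.le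
    have step : (a / Real.sqrt (Real.pi ^ 2 - a ^ 2)) * q *
        ((a / Real.sqrt (Real.pi ^ 2 - a ^ 2)) * q)
        = a ^ 2 * q ^ 2 * (Real.sqrt (Real.pi ^ 2 - a ^ 2) ^ 2)⁻¹ := by ring
    rw [step, h2]
    ring
  obtain ⟨e₁, e₂, hsum, hprod⟩ :=
    exists_roots (Real.pi ^ 2 / (Real.pi ^ 2 - a ^ 2)) p q hk1 hpq
  -- Hermitian structure
  have hH : (shearedHessian a p q r).IsHermitian := by
    unfold Matrix.IsHermitian
    ext i j
    fin_cases i <;> fin_cases j <;>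
      simp [shearedHessian, Matrix.conjTranspose_apply]
  have hD3 : (Matrix.diagonal ![p, q, r]).IsHermitian := by
    unfold Matrix.IsHermitian
    ext i j
    fin_cases i <;> fin_cases j <;>
      simp [Matrix.conjTranspose_apply, Matrix.diagonal_apply]
  -- characteristic polynomials
  have hAB1 : e₁ + e₂ =
      (Real.pi ^ 2 / (Real.pi ^ 2 - a ^ 2) * p + a ^ 2 / (Real.pi ^ 2 - a ^ 2) * q) + q := by
    rw [hsum]; field_simp; ring
  have hAB2 : e₁ * e₂ =
      (Real.pi ^ 2 / (Real.pi ^ 2 - a ^ 2) * p + a ^ 2 / (Real.pi ^ 2 - a ^ 2) * q) * q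
        - a ^ 2 / (Real.pi ^ 2 - a ^ 2) * q ^ 2 := by
    rw [hprod]; ring
  have hcsh : (shearedHessian a p q r).charpoly =
      ((X : ℝ[X]) - C e₁) * (X - C e₂)
        * (X - C (Real.pi ^ 2 / (Real.pi ^ 2 - a ^ 2) * r)) := by
    have step : (shearedHessian a p q r).charpoly =
        (((X : ℝ[X]) - C (Real.pi ^ 2 / (Real.pi ^ 2 - a ^ 2) * p
              + a ^ 2 / (Real.pi ^ 2 - a ^ 2) * q))
            * (X - C q) - C ((a / Real.sqrt (Real.pi ^ 2 - a ^ 2)) * q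
              * ((a / Real.sqrt (Real.pi ^ 2 - a ^ 2)) * q)))
          * (X - C (Real.pi ^ 2 / (Real.pi ^ 2 - a ^ 2) * r)) := by
      rw [Matrix.charpoly, Matrix.det_fin_three]
      simp [shearedHessian, Matrix.charmatrix_apply, Matrix.diagonal_apply]
      ring
    rw [step, ht, quad_factor _ _ _ _ _ hAB1 hAB2]
  have hcd : (Matrix.diagonal ![p, q, r]).charpoly =
      ((X : ℝ[X]) - C p) * (X - C q) * (X - C r) := by
    rw [charpoly_diagonal', Fin.prod_univ_three]
    simp
  rw [pucci_eq_roots lam Lam _ hH, pucci_eq_roots lam Lam _ hD3, hcsh, hcd,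
    roots_cubic, roots_cubic]
  simp only [Multiset.insert_eq_cons, Multiset.map_cons, Multiset.map_singleton,
    Multiset.sum_cons, Multiset.sum_singleton]
  rw [pucci_scale lam Lam _ r hk0.le]
  have hpair := pucci_pair lam Lam (Real.pi ^ 2 / (Real.pi ^ 2 - a ^ 2)) p q e₁ e₂
    hk0 hpq hsum hprod
  linear_combination hpair
end
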